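/- arXiv:1703.03088 — 2 statements merged into one kernel-verified Lean document; each statement's English description precedes it below -/
import Mathlib

section
/- In a coinversion-free augmented filling, any two boxes in the same column have distinct entries, and any two boxes in adjacent columns with equal entries must have the right box in a row weakly above the left box; i.e., every coinversion-free filling is non-attacking. -/
namespace Paper

/-! ## Augmented fillings, triples, major index (HHL model) -/

/-- Tie-broken strict order on (value, subscript) pairs: equal values are
ordered by subscript. -/
def tlt (x y : ℕ × ℕ) : Prop := x.1 < y.1 ∨ (x.1 = y.1 ∧ x.2 < y.2)

/-- `cyc x y z`: the three tie-broken values, read increasingly, follow the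
cyclic order x → y → z. -/
def cyc (x y z : ℕ × ℕ) : Prop :=
  (tlt x y ∧ tlt y z) ∨ (tlt y z ∧ tlt z x) ∨ (tlt z x ∧ tlt x y)

variable {n : ℕ}

/-- A type A triple: `a = (r, j-1)`, `b = (r, j)`, `c = (r', j)` with `r'` below `r`
and the row of `a, b` at least as long as that of `c`. -/
def typeA (α : Fin n → ℕ) (r r' : Fin n) (j : ℕ) : Prop :=
  r < r' ∧ 1 ≤ j ∧ j ≤ α r ∧ j ≤ α r' ∧ α r' ≤ α r

/-- A type B triple: `a = (r, j-1)`, `b = (r, j)`, `c = (r', j-1)` with `r'` above `r`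
and the row of `a, b` strictly longer than that of `c`. -/
def typeB (α : Fin n → ℕ) (r r' : Fin n) (j : ℕ) : Prop :=
  r' < r ∧ 1 ≤ j ∧ j ≤ α r ∧ j - 1 ≤ α r' ∧ α r' < α r

/-- A type A triple is an inversion triple if the entries ordered increasingly
(with subscripts a₃, b₁, c₂ breaking ties) follow the counterclockwise cycle b → a → c. -/
def invA (F : Fin n → ℕ → ℕ) (r r' : Fin n) (j : ℕ) : Prop :=
  cyc (F r j, 1) (F r (j-1), 3) (F r' j, 2)

/-- A type B triple is an inversion triple if the entries ordered increasingly
(with subscripts c₂, a₃, b₁ breaking ties) follow the clockwise cycle c → b → a. -/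
def invB (F : Fin n → ℕ → ℕ) (r r' : Fin n) (j : ℕ) : Prop :=
  cyc (F r' (j-1), 2) (F r j, 1) (F r (j-1), 3)

/-- Coinversion-free: every type A and type B triple is an inversion triple. -/
def CoinvFree (α : Fin n → ℕ) (F : Fin n → ℕ → ℕ) : Prop :=
  (∀ r r' j, typeA α r r' j → invA F r r' j) ∧
  (∀ r r' j, typeB α r r' j → invB F r r' j)

/-- Inversion-free: no type A or type B triple is an inversion triple. -/
def InvFree (α : Fin n → ℕ) (F : Fin n → ℕ → ℕ) : Prop :=
  (∀ r r' j, typeA α r r' j → ¬ invA F r r' j) ∧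
  (∀ r r' j, typeB α r r' j → ¬ invB F r r' j)

/-- The major index: the sum of `leg(u) + 1` over all descents `u`
(non-basement boxes whose entry strictly exceeds that of their left neighbour). -/
def maj (α : Fin n → ℕ) (F : Fin n → ℕ → ℕ) : ℕ :=
  ∑ i : Fin n, ∑ j ∈ Finset.Icc 1 (α i), if F i (j-1) < F i j then α i - j + 1 else 0

/-- The non-basement part of a filling of shape `α`, with entries encoded as
`Fin n` (representing the values `1, …, n`). -/
abbrev Fill (n : ℕ) (α : Fin n → ℕ) := (i : Fin n) → Fin (α i) → Fin n

/-- The entry of the augmented filling at row `i`, column `j`; column `0` is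
the basement `σ`, and column `j ≥ 1` holds the value `G i (j-1) + 1 ∈ {1, …, n}`. -/
def entry (α : Fin n → ℕ) (σ : Fin n → ℕ) (G : Fill n α) : Fin n → ℕ → ℕ :=
  fun i j => if j = 0 then σ i else if h : j - 1 < α i then ((G i ⟨j - 1, h⟩ : ℕ) + 1) else 0

/-- The key basement `w₀ = (n, n-1, …, 1)`, read top to bottom. -/
def keyBasement (n : ℕ) : Fin n → ℕ := fun i => n - (i : ℕ)

/-- The reversal on `Fin n` (0-indexed version of `i ↦ n + 1 - i`). -/
def revFin {n : ℕ} (k : Fin n) : Fin n := ⟨n - 1 - (k : ℕ), by have := k.isLt; omega⟩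

/-- The set of entries of the `j`-th (non-basement, `j ≥ 1`) column. -/
def colFinset (α : Fin n → ℕ) (σ : Fin n → ℕ) (G : Fill n α) (j : ℕ) : Finset ℕ :=
  (Finset.univ.filter (fun i : Fin n => j ≤ α i)).image (fun i => entry α σ G i j)

/-- The multiset of entries of the `j`-th (non-basement, `j ≥ 1`) column. -/
def colMultiset (α : Fin n → ℕ) (σ : Fin n → ℕ) (G : Fill n α) (j : ℕ) : Multiset ℕ :=
  (Finset.univ.filter (fun i : Fin n => j ≤ α i)).val.map (fun i => entry α σ G i j)

/-- The multiset of all non-basement entries (the weight of the filling). -/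
def allEntries (α : Fin n → ℕ) (G : Fill n α) : Multiset ℕ :=
  ∑ i : Fin n, ((Finset.univ : Finset (Fin (α i))).val.map (fun j => (G i j : ℕ) + 1))

/-- The largest part of `α`. -/
def maxPart (α : Fin n → ℕ) : ℕ := Finset.univ.sup α

/-- The down-increasing condition on a column with entries `d` (top), `e` (middle),
`f` (bottom): `e > d > f` or `d > f > e` or `f > e > d`. -/
def downInc (d e f : ℕ) : Prop := (f < d ∧ d < e) ∨ (e < f ∧ f < d) ∨ (d < e ∧ e < f)

/-! ## Generating polynomials; the variables `x_1, x_2, …` are indexed by `ℕ`,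
and `q` is the variable of the coefficient ring `ℤ[q]`. -/

/-- The monomial `x^F` of a filling. -/
noncomputable def xwt (α : Fin n → ℕ) (G : Fill n α) : MvPolynomial ℕ (Polynomial ℤ) :=
  ∏ i : Fin n, ∏ j : Fin (α i), MvPolynomial.X ((G i j : ℕ) + 1)

open Classical in
/-- `E^σ_α(x; q, 0) = Σ_{F coinversion-free} q^{maj F} x^F`. -/
noncomputable def Epoly (α σ : Fin n → ℕ) : MvPolynomial ℕ (Polynomial ℤ) :=
  ∑ G : Fill n α, if CoinvFree α (entry α σ G) then
    MvPolynomial.C (Polynomial.X ^ maj α (entry α σ G)) * xwt α G else 0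

open Classical in
/-- `H̃^σ_α(x; q, 0) = Σ_{F inversion-free} q^{maj F} x^F`. -/
noncomputable def Hpoly (α σ : Fin n → ℕ) : MvPolynomial ℕ (Polynomial ℤ) :=
  ∑ G : Fill n α, if InvFree α (entry α σ G) then
    MvPolynomial.C (Polynomial.X ^ maj α (entry α σ G)) * xwt α G else 0

/-! ## Tableaux and Schur polynomials -/

/-- A filling of the diagram of `ν` with entries in `Fin N` (values `1, …, N`). -/
abbrev Tab (m : ℕ) (ν : Fin m → ℕ) (N : ℕ) := (i : Fin m) → Fin (ν i) → Fin N

/-- Semistandardness: rows weakly increase, columns strictly increase. -/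
def IsSSYT {m N : ℕ} (ν : Fin m → ℕ) (T : Tab m ν N) : Prop :=
  (∀ i : Fin m, ∀ j j' : Fin (ν i), j ≤ j' → T i j ≤ T i j') ∧
  (∀ i i' : Fin m, i < i' → ∀ j : Fin (ν i'), ∀ hj : (j : ℕ) < ν i, T i ⟨j, hj⟩ < T i' j)

/-- Number of occurrences of the value `v` in the tableau. -/
def tabCount {m N : ℕ} (ν : Fin m → ℕ) (T : Tab m ν N) (v : Fin N) : ℕ :=
  ∑ i : Fin m, (Finset.univ.filter (fun j : Fin (ν i) => T i j = v)).card

/-- The monomial `x^T` of a tableau. -/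
noncomputable def xwtTab {m N : ℕ} (ν : Fin m → ℕ) (T : Tab m ν N) :
    MvPolynomial ℕ (Polynomial ℤ) :=
  ∏ i : Fin m, ∏ j : Fin (ν i), MvPolynomial.X ((T i j : ℕ) + 1)

open Classical in
/-- The Schur polynomial `s_ν(x_1, …, x_N)` as the generating function of SSYT. -/
noncomputable def schurPoly (m : ℕ) (ν : Fin m → ℕ) (N : ℕ) : MvPolynomial ℕ (Polynomial ℤ) :=
  ∑ T : Tab m ν N, if IsSSYT ν T then xwtTab ν T else 0

/-- The reading word of a tableau: rows left to right, bottom row first. -/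
def readingWord {m N : ℕ} (ν : Fin m → ℕ) (T : Tab m ν N) : List ℕ :=
  ((List.finRange m).reverse).flatMap
    (fun i => (List.finRange (ν i)).map (fun j => (T i j : ℕ) + 1))

/-- The conjugate shape: `ν'_j = #{i : ν_i ≥ j}`. -/
def conjShape (m : ℕ) (ν : Fin m → ℕ) : Fin m → ℕ :=
  fun j => (Finset.univ.filter (fun i => (j : ℕ) + 1 ≤ ν i)).card

/-! ## Charge and cocharge of words -/

/-- Minimum of a list, if nonempty. -/
def listMin : List ℕ → Option ℕ
  | [] => none
  | a :: t => match listMin t with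
    | none => some a
    | some b => some (min a b)

/-- The major index of a list: the sum of the (1-indexed) positions of descents. -/
def majList (l : List ℕ) : ℕ :=
  (List.range (l.length - 1)).foldl
    (fun acc i => if l.getD (i+1) 0 < l.getD i 0 then acc + i + 1 else acc) 0

/-- The inverse of a word `w` that is a permutation of `1, …, k`:
its `v`-th letter is the (1-indexed) position of `v` in `w`. -/
def invPerm (w : List ℕ) : List ℕ :=
  (List.range w.length).map (fun v => w.idxOf (v+1) + 1)

/-- Charge of a permutation word: `maj(reverse(w⁻¹))`. -/
def chargePerm (w : List ℕ) : ℕ := majList (invPerm w).reverse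

/-- Cocharge of a permutation word: the binomial maximum minus the charge. -/
def cochargePerm (w : List ℕ) : ℕ := w.length.choose 2 - chargePerm w

/-- Largest index `< p` where `w` has the letter `t`. -/
def findBelow (w : List ℕ) (p t : ℕ) : Option ℕ :=
  ((List.range p).filter (fun i => w.getD i 0 == t)).getLast?

/-- Largest index where `w` has the letter `t` (used for wrap-around). -/
def findAny (w : List ℕ) (t : ℕ) : Option ℕ :=
  ((List.range w.length).filter (fun i => w.getD i 0 == t)).getLast?

/-- Extraction scan: from position `p`, scanning right to left (wrapping around if
necessary) find the letter `t`, then continue with the next larger letter value. -/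
def extractGo (w : List ℕ) : ℕ → ℕ → ℕ → List ℕ → List ℕ
  | 0, _, _, acc => acc
  | fuel+1, p, t, acc =>
    match (match findBelow w p t with | some i => some i | none => findAny w t) with
    | none => acc
    | some i =>
      match listMin (w.filter (fun x => decide (t < x))) with
      | none => i :: acc
      | some t' => extractGo w fuel i t' (i :: acc)

/-- Indices of the first standard subword of `w` (rightmost occurrence of the
smallest letter, then the right-to-left wrap-around scan up to the largest letter). -/
def extractIndices (w : List ℕ) : List ℕ :=
  match listMin w with
  | none => []
  | some v0 => extractGo w w.length w.length v0 []

/-- The standard subword decomposition of a word (with fuel). -/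
def subwordsGo : ℕ → List ℕ → List (List ℕ)
  | 0, _ => []
  | fuel+1, w =>
    if w.isEmpty then [] else
    let I := extractIndices w
    let sub := ((List.range w.length).filter (fun i => I.contains i)).map (fun i => w.getD i 0)
    let rest := ((List.range w.length).filter (fun i => !(I.contains i))).map (fun i => w.getD i 0)
    sub :: subwordsGo fuel rest

/-- The standard subwords of a word. -/
def subwords (w : List ℕ) : List (List ℕ) := subwordsGo w.length w

/-- Charge of a word: the sum of the charges of its standard subwords. -/
def chargeWord (w : List ℕ) : ℕ := ((subwords w).map chargePerm).sum

/-- Cocharge of a word: the sum of the cocharges of its standard subwords. -/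
def cochargeWord (w : List ℕ) : ℕ := ((subwords w).map cochargePerm).sum

/-- The charge word `cw(F)`: list the entries in increasing order (ties broken by
increasing column index) and record their column indices. -/
def cw (α σ : Fin n → ℕ) (G : Fill n α) : List ℕ :=
  (List.range n).flatMap (fun v =>
    (List.range (maxPart α)).filterMap (fun j =>
      if ∃ i : Fin n, j + 1 ≤ α i ∧ entry α σ G i (j+1) = v + 1 then some (j+1) else none))

/-- The cocharge word `ccw(F)`: list the entries in decreasing order (ties broken by
increasing column index, with multiplicity) and record their column indices. -/
def ccw (α σ : Fin n → ℕ) (G : Fill n α) : List ℕ :=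
  ((List.range n).reverse).flatMap (fun v =>
    (List.range (maxPart α)).flatMap (fun j =>
      List.replicate ((Finset.univ.filter
        (fun i : Fin n => j + 1 ≤ α i ∧ entry α σ G i (j+1) = v + 1)).card) (j+1)))

/-! ## Two-row fillings as lists (including the basement at index 0) -/

/-- The entry function of a two-row filling with top row `T` and bottom row `B`
(both including their basement entry at index 0). -/
def twoRowEntry (T B : List ℕ) : Fin 2 → ℕ → ℕ :=
  fun i j => if i.val = 0 then T.getD j 0 else B.getD j 0

/-- The multiset of entries in column `j` of a two-row filling. -/
def colM (T B : List ℕ) (j : ℕ) : Multiset ℕ :=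
  (if j < T.length then {T.getD j 0} else 0) + (if j < B.length then {B.getD j 0} else 0)

/-- The filling rule at a two-entry column `{A, B}` with bottom reference entry `C`,
returning (bottom entry, top entry): the least entry greater than `C` goes to the
bottom if one exists, otherwise the smallest entry goes to the bottom. -/
def phiRule (C A B : ℕ) : ℕ × ℕ :=
  if C < A ∧ C < B then (min A B, max A B)
  else if C < A then (A, B)
  else if C < B then (B, A)
  else (min A B, max A B)

/-- Process the two-entry columns right to left (input and output reversed),
threading the current bottom reference entry `C`. -/
def phiPairs : List (ℕ × ℕ) → ℕ → List (ℕ × ℕ)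
  | [], _ => []
  | (A, B) :: r, C =>
    let q := phiRule C A B
    q :: phiPairs r q.1

/-- The filling-rule map `φ` on a two-row filling with rows `T` (long, incl. basement)
and `B` (short, incl. basement): single-entry columns go to the bottom row, two-entry
columns are resolved by `phiRule`, processing right to left.
Returns (new long bottom row, new short top row). -/
def phi (T B : List ℕ) : List ℕ × List ℕ :=
  let k := B.length
  let tail := T.drop k
  let C0 := T.getD k 0
  let res := (phiPairs ((T.take k).zip B).reverse C0).reverse
  (res.map Prod.fst ++ tail, res.map Prod.snd)


/-! Two equal entries in one column, or in adjacent columns with the right one strictly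
lower, are two boxes of a type A or a type B triple (which type depends on which of the two
rows is longer). The subscripts that break ties between equal entries make such a triple a
coinversion triple. In the basement column the entries are distinct because `σ` is a
permutation. -/

lemma cyc_rotate {x y z : ℕ × ℕ} (h : cyc x y z) : cyc y z x := by
  unfold cyc at h ⊢
  tauto

lemma cyc.between_of_fst_eq {x y z : ℕ × ℕ} (h : cyc x y z) (hxy : x.1 = y.1)
    (hyx : y.2 < x.2) : z.1 = x.1 ∧ y.2 < z.2 ∧ z.2 < x.2 := by
  simp only [cyc, tlt] at h
  omega

variable {α : Fin n → ℕ} {F : Fin n → ℕ → ℕ} {r r' : Fin n} {j : ℕ}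

lemma invA.right_ne_below (h : invA F r r' j) : F r j ≠ F r' j := fun heq => by
  have := (cyc_rotate (cyc_rotate h)).between_of_fst_eq heq.symm (by norm_num)
  omega

lemma invA.left_ne_below (h : invA F r r' j) : F r (j - 1) ≠ F r' j := fun heq => by
  have := (cyc_rotate h).between_of_fst_eq heq (by norm_num)
  omega

lemma invB.above_ne_left (h : invB F r r' j) : F r' (j - 1) ≠ F r (j - 1) := fun heq => by
  have := (cyc_rotate (cyc_rotate h)).between_of_fst_eq heq.symm (by norm_num)
  omega

lemma invB.right_ne_above (h : invB F r r' j) : F r j ≠ F r' (j - 1) := fun heq => by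
  have := h.between_of_fst_eq heq.symm (by norm_num)
  omega

namespace CoinvFree

lemma ne_of_lt_of_same_column (hF : CoinvFree α F) {i i' : Fin n} (hii' : i < i')
    (hj : 1 ≤ j) (hji : j ≤ α i) (hji' : j ≤ α i') : F i j ≠ F i' j := by
  rcases le_or_gt (α i') (α i) with hle | hlt
  · exact (hF.1 i i' j ⟨hii', hj, hji, hji', hle⟩).right_ne_below
  · have := hF.2 i' i (j + 1) ⟨hii', by omega, by omega, by simpa using hji, hlt⟩
    simpa using this.above_ne_left

lemma ne_of_same_column (hF : CoinvFree α F) {i i' : Fin n} (hii' : i ≠ i')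
    (hj : 1 ≤ j) (hji : j ≤ α i) (hji' : j ≤ α i') : F i j ≠ F i' j := by
  rcases hii'.lt_or_gt with hlt | hgt
  · exact hF.ne_of_lt_of_same_column hlt hj hji hji'
  · exact (hF.ne_of_lt_of_same_column hgt hj hji' hji).symm

lemma ne_of_adjacent_columns (hF : CoinvFree α F) {i i' : Fin n} (hi'i : i' < i)
    (hji' : j ≤ α i') (hji : j + 1 ≤ α i) : F i (j + 1) ≠ F i' j := by
  rcases le_or_gt (α i) (α i') with hle | hlt
  · simpa using (hF.1 i' i (j + 1) ⟨hi'i, by omega, by omega, hji, hle⟩).left_ne_below.symm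
  · have := hF.2 i i' (j + 1) ⟨hi'i, by omega, hji, by simpa using hji', hlt⟩
    simpa using this.right_ne_above

end CoinvFree

lemma entry_zero (σ : Fin n → ℕ) (G : Fill n α) (i : Fin n) : entry α σ G i 0 = σ i := rfl

/-- Every coinversion-free filling is non-attacking: entries in the same column are
distinct, and equal entries in adjacent columns must have the right box weakly above
the left box. -/
theorem coinvfree_is_nonattacking (n : ℕ) (α : Fin n → ℕ) (σ : Equiv.Perm (Fin n))
    (b : Fin n → ℕ) (hb : b = fun i => (σ i : ℕ) + 1)
    (G : Fill n α) (hF : CoinvFree α (entry α b G)) :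
    (∀ i i' : Fin n, ∀ j : ℕ, i ≠ i' → j ≤ α i → j ≤ α i' →
      entry α b G i j ≠ entry α b G i' j) ∧
    (∀ i i' : Fin n, ∀ j : ℕ, i' < i → j ≤ α i' → j + 1 ≤ α i →
      entry α b G i (j + 1) ≠ entry α b G i' j) := by
  refine ⟨fun i i' j hii' hji hji' => ?_, fun i i' j hi'i => hF.ne_of_adjacent_columns hi'i⟩
  rcases Nat.eq_zero_or_pos j with rfl | hj
  · have hσ : σ i ≠ σ i' := σ.injective.ne hii'
    simp only [entry_zero, hb, ne_eq, add_left_inj]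
    exact Fin.val_injective.ne hσ
  · exact hF.ne_of_same_column hii' hj hji hji'

end Paper
end

section
/- Key polynomial identity: for a partition λ with n parts, the key polynomial K_λ(x_1,...,x_n), defined as the generating function Σ x^F over coinversion-free fillings of shape λ with key basement w0 = (n,...,1) and no descents (i.e., E^{w0}_λ(x;0,0)), equals the Schur polynomial s_λ(x_1,...,x_n). -/
namespace Paper

variable {n : ℕ}

/-!
For the strictly decreasing basement `w₀` and a partition shape there are no type B triples, and
in a filling without descents a type A triple is an inversion triple exactly when its column
decreases strictly there. So `K_λ` is the generating function of reverse semistandard tableaux,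
which complementing the entries turns into `s_λ(x_n, …, x_1)`; this equals `s_λ(x_1, …, x_n)`
because Schur polynomials are symmetric.

Symmetry is proved with Bender–Knuth involutions, which are cleanest in terms of row counts. If
`μ i`, `ν i`, `κ i` count the entries `< a`, `≤ a`, `≤ a + 1` of row `i`, semistandardness is
the interlacing of these counts, which confines `ν i` to the interval
`[max (μ i) (κ (i + 1)), min (κ i) (μ (i - 1))]`, whose endpoints depend only on `μ` and `κ`.
Reflecting every `ν i` in its interval is therefore an involution on semistandard tableaux, and
since the endpoints sum to `∑ i, (μ i + κ i)` it exchanges the numbers of letters `a`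
and `a + 1`.
-/

open Finset

section Tableaux

variable {m N : ℕ} {ν : Fin m → ℕ}

/-- Rows `i ≥ m` count as empty, so that neighbouring rows need no side conditions. -/
def rowCount (T : Tab m ν N) (t i : ℕ) : ℕ :=
  if h : i < m then #{j : Fin (ν ⟨i, h⟩) | (T ⟨i, h⟩ j : ℕ) < t} else 0

lemma rowCount_val (T : Tab m ν N) (t : ℕ) (i : Fin m) :
    rowCount T t i = #{j | (T i j : ℕ) < t} := by
  simp [rowCount]

lemma rowCount_of_le (T : Tab m ν N) {t i : ℕ} (h : m ≤ i) : rowCount T t i = 0 :=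
  dif_neg (by omega)

lemma rowCount_zero (T : Tab m ν N) (i : ℕ) : rowCount T 0 i = 0 := by
  simp [rowCount]

lemma rowCount_mono (T : Tab m ν N) (i : ℕ) : Monotone (rowCount T · i) := by
  intro t t' h
  unfold rowCount
  split_ifs
  · exact card_le_card fun j hj => by
      simp only [mem_filter, mem_univ, true_and] at hj ⊢
      omega
  · rfl

lemma rowCount_le_length (T : Tab m ν N) (t : ℕ) (i : Fin m) : rowCount T t i ≤ ν i := by
  rw [rowCount_val]
  exact (card_filter_le _ _).trans_eq (card_fin _)

lemma lt_iff_lt_rowCount {T : Tab m ν N} {i : Fin m} (hi : Monotone (T i)) (j : Fin (ν i))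
    (t : ℕ) : (T i j : ℕ) < t ↔ (j : ℕ) < rowCount T t i := by
  rw [rowCount_val]
  constructor
  · intro h
    calc (j : ℕ) < #(Iic j) := by simp
      _ ≤ _ := card_le_card fun j' hj' => by
        simp only [mem_Iic, mem_filter, mem_univ, true_and] at hj' ⊢
        exact (Fin.le_def.1 (hi hj')).trans_lt h
  · intro h
    by_contra h'
    have : #{j' | (T i j' : ℕ) < t} ≤ #(Iio j) := card_le_card fun j' hj' => by
      simp only [mem_Iio, mem_filter, mem_univ, true_and] at hj' ⊢
      by_contra hc
      have := Fin.le_def.1 (hi (not_lt.1 hc))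
      omega
    simp only [Fin.card_Iio] at this
    omega

lemma rowCount_eq_of_lt_iff {T : Tab m ν N} {i : Fin m} {t c : ℕ} (hc : c ≤ ν i)
    (h : ∀ j : Fin (ν i), (T i j : ℕ) < t ↔ (j : ℕ) < c) : rowCount T t i = c := by
  rw [rowCount_val, filter_congr fun j _ => h j, Fin.card_filter_val_lt]
  omega

lemma monotone_of_lt_iff {T : Tab m ν N} {i : Fin m} (c : ℕ → ℕ)
    (h : ∀ t (j : Fin (ν i)), (T i j : ℕ) < t ↔ (j : ℕ) < c t) : Monotone (T i) := by
  intro j j' hjj'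
  have h1 := (h (T i j' + 1) j').1 (by omega)
  have h2 := (h (T i j' + 1) j).2 ((Fin.le_def.1 hjj').trans_lt h1)
  exact Fin.le_def.2 (by omega)

lemma eq_of_rowCount_eq {T T' : Tab m ν N} (hT : ∀ i, Monotone (T i))
    (hT' : ∀ i, Monotone (T' i)) (h : ∀ t, rowCount T t = rowCount T' t) : T = T' := by
  funext i j
  have key : ∀ t, (T i j : ℕ) < t ↔ (T' i j : ℕ) < t := fun t => by
    rw [lt_iff_lt_rowCount (hT i), lt_iff_lt_rowCount (hT' i), h]
  have h1 := (key (T' i j + 1)).2 (by omega)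
  have h2 := (key (T i j + 1)).1 (by omega)
  exact Fin.ext (by omega)

/-- Column strictness is the interlacing of the row counts (the Gelfand–Tsetlin pattern). -/
theorem isSSYT_iff_rowCount {T : Tab m ν N} (hν : Antitone ν) :
    IsSSYT ν T ↔
      (∀ i, Monotone (T i)) ∧ ∀ t i, rowCount T (t + 1) (i + 1) ≤ rowCount T t i := by
  constructor
  · intro hT
    refine ⟨hT.1, fun t i => ?_⟩
    by_cases hi : i + 1 < m
    swap
    · rw [rowCount_of_le T (not_lt.1 hi)]
      exact Nat.zero_le _
    let r : Fin m := ⟨i, by omega⟩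
    let r' : Fin m := ⟨i + 1, hi⟩
    have hrr' : r < r' := Fin.lt_def.2 (Nat.lt_succ_self i)
    change rowCount T (t + 1) r' ≤ rowCount T t r
    by_contra! hlt
    set c := rowCount T t r
    have hj : c < ν r' := hlt.trans_le (rowCount_le_length T _ r')
    have hjr : c < ν r := hj.trans_le (hν hrr'.le)
    have h1 := (lt_iff_lt_rowCount (hT.1 r') ⟨c, hj⟩ (t + 1)).2 hlt
    have h2 : T r ⟨c, hjr⟩ < T r' ⟨c, hj⟩ := hT.2 r r' hrr' ⟨c, hj⟩ hjr
    have h3 := (lt_iff_lt_rowCount (hT.1 r) ⟨c, hjr⟩ t).1 (by rw [Fin.lt_def] at h2; omega)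
    exact lt_irrefl _ h3
  · rintro ⟨hrow, hint⟩
    have hanti : ∀ s, Antitone (rowCount T s) := fun s => antitone_nat_of_succ_le fun k => by
      cases s with
      | zero => simp [rowCount_zero]
      | succ s => exact (hint s k).trans (rowCount_mono T k (Nat.le_succ s))
    refine ⟨hrow, fun i i' hii' j hj => ?_⟩
    have h1 := (lt_iff_lt_rowCount (hrow i') j (T i' j + 1)).1 (by omega)
    have h2 := (hanti (T i' j + 1) (Nat.succ_le_of_lt (Fin.lt_def.1 hii'))).trans (hint (T i' j) i)
    exact Fin.lt_def.2 ((lt_iff_lt_rowCount (hrow i) ⟨j, hj⟩ _).2 (by simp only; omega))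

lemma sum_rowCount_succ (T : Tab m ν N) (v : Fin N) :
    ∑ i : Fin m, rowCount T (v + 1) i = ∑ i : Fin m, rowCount T v i + tabCount ν T v := by
  rw [tabCount, ← sum_add_distrib]
  refine sum_congr rfl fun i _ => ?_
  rw [rowCount_val, rowCount_val, ← card_union_of_disjoint (disjoint_filter.2 fun j _ h h' => by
    rw [h'] at h; exact lt_irrefl _ h)]
  congr 1
  ext j
  simp only [mem_filter, mem_univ, true_and, mem_union, Fin.ext_iff]
  omega

lemma IsSSYT.row_le_entry {T : Tab m ν N} (hT : IsSSYT ν T) (hν : Antitone ν) (i : Fin m)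
    (j : Fin (ν i)) : (i : ℕ) ≤ T i j := by
  obtain ⟨k, hk⟩ : ∃ k, (i : ℕ) = k := ⟨_, rfl⟩
  induction k generalizing i with
  | zero => omega
  | succ k ih =>
    let i' : Fin m := ⟨k, by omega⟩
    have hi' : i' < i := Fin.lt_def.2 (by simp [i']; omega)
    have hj : (j : ℕ) < ν i' := j.isLt.trans_le (hν hi'.le)
    have h1 : k ≤ T i' ⟨j, hj⟩ := ih i' ⟨j, hj⟩ rfl
    have h2 := Fin.lt_def.1 (hT.2 i' i hi' j hj)
    omega

end Tableaux

section BenderKnuth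

def interlaceLow (μ κ : ℕ → ℕ) (i : ℕ) : ℕ := max (μ i) (κ (i + 1))

/-- There is no row above row `0`. -/
def interlaceHigh (μ κ : ℕ → ℕ) : ℕ → ℕ
  | 0 => κ 0
  | i + 1 => min (κ (i + 1)) (μ i)

lemma interlaceHigh_le (μ κ : ℕ → ℕ) (i : ℕ) : interlaceHigh μ κ i ≤ κ i := by
  cases i <;> simp [interlaceHigh]

/-- The `max` at row `i` pairs off with the `min` at row `i + 1`. -/
lemma sum_interlaceLow_add_interlaceHigh (μ κ : ℕ → ℕ) (m : ℕ) :
    ∑ i ∈ range m, (interlaceLow μ κ i + interlaceHigh μ κ i) + interlaceHigh μ κ m =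
      ∑ i ∈ range m, (μ i + κ i) + κ m := by
  induction m with
  | zero => simp [interlaceHigh]
  | succ m ih =>
    have hL : interlaceLow μ κ m = max (μ m) (κ (m + 1)) := rfl
    have hU : interlaceHigh μ κ (m + 1) = min (κ (m + 1)) (μ m) := rfl
    rw [sum_range_succ, sum_range_succ, hL, hU]
    omega

variable {m N : ℕ} {ν : Fin m → ℕ}

def bkCount (T : Tab m ν N) (a i : ℕ) : ℕ :=
  interlaceLow (rowCount T a) (rowCount T (a + 2)) i +
    interlaceHigh (rowCount T a) (rowCount T (a + 2)) i - rowCount T (a + 1) i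

def bk (T : Tab m ν N) (a : ℕ) (ha : a + 1 < N) : Tab m ν N := fun i j =>
  if a ≤ (T i j : ℕ) ∧ (T i j : ℕ) ≤ a + 1 then
    if (j : ℕ) < bkCount T a i then ⟨a, by omega⟩ else ⟨a + 1, ha⟩
  else T i j

lemma val_bk (T : Tab m ν N) {a : ℕ} (ha : a + 1 < N) (i : Fin m) (j : Fin (ν i)) :
    (bk T a ha i j : ℕ) = if a ≤ (T i j : ℕ) ∧ (T i j : ℕ) ≤ a + 1 then
      (if (j : ℕ) < bkCount T a i then a else a + 1) else T i j := by
  unfold bk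
  split_ifs <;> rfl

variable {T : Tab m ν N}

lemma interlaceLow_le_rowCount (hν : Antitone ν) (hT : IsSSYT ν T) (a i : ℕ) :
    interlaceLow (rowCount T a) (rowCount T (a + 2)) i ≤ rowCount T (a + 1) i :=
  max_le (rowCount_mono T i (Nat.le_succ a)) (((isSSYT_iff_rowCount hν).1 hT).2 (a + 1) i)

lemma rowCount_le_interlaceHigh (hν : Antitone ν) (hT : IsSSYT ν T) (a i : ℕ) :
    rowCount T (a + 1) i ≤ interlaceHigh (rowCount T a) (rowCount T (a + 2)) i := by
  cases i with
  | zero => exact rowCount_mono T 0 (Nat.le_succ _)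
  | succ i =>
    exact le_min (rowCount_mono T _ (Nat.le_succ _)) (((isSSYT_iff_rowCount hν).1 hT).2 a i)

lemma interlaceLow_le_bkCount (hν : Antitone ν) (hT : IsSSYT ν T) (a i : ℕ) :
    interlaceLow (rowCount T a) (rowCount T (a + 2)) i ≤ bkCount T a i := by
  have := interlaceLow_le_rowCount hν hT a i
  have := rowCount_le_interlaceHigh hν hT a i
  unfold bkCount
  omega

lemma bkCount_le_interlaceHigh (hν : Antitone ν) (hT : IsSSYT ν T) (a i : ℕ) :
    bkCount T a i ≤ interlaceHigh (rowCount T a) (rowCount T (a + 2)) i := by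
  have := interlaceLow_le_rowCount hν hT a i
  unfold bkCount
  omega

lemma bkCount_of_le (T : Tab m ν N) (a : ℕ) {i : ℕ} (h : m ≤ i) : bkCount T a i = 0 := by
  have hU := interlaceHigh_le (rowCount T a) (rowCount T (a + 2)) i
  simp only [bkCount, interlaceLow, rowCount_of_le T h, rowCount_of_le T (h.trans (Nat.le_succ i))]
    at hU ⊢
  omega

lemma val_bk_lt_iff (hν : Antitone ν) (hT : IsSSYT ν T) {a : ℕ} (ha : a + 1 < N) (i : Fin m)
    (j : Fin (ν i)) (t : ℕ) :
    (bk T a ha i j : ℕ) < t ↔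
      (j : ℕ) < if t = a + 1 then bkCount T a i else rowCount T t i := by
  have hμ := lt_iff_lt_rowCount (hT.1 i) j a
  have hκ := lt_iff_lt_rowCount (hT.1 i) j (a + 2)
  have ht := lt_iff_lt_rowCount (hT.1 i) j t
  have hL := interlaceLow_le_rowCount hν hT a i
  have hU := rowCount_le_interlaceHigh hν hT a i
  have hUκ := interlaceHigh_le (rowCount T a) (rowCount T (a + 2)) i
  rw [val_bk]
  unfold bkCount interlaceLow at *
  split_ifs <;> omega

lemma rowCount_bk (hν : Antitone ν) (hT : IsSSYT ν T) {a : ℕ} (ha : a + 1 < N) (t i : ℕ) :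
    rowCount (bk T a ha) t i = if t = a + 1 then bkCount T a i else rowCount T t i := by
  by_cases hi : i < m
  · obtain ⟨i, rfl⟩ : ∃ i' : Fin m, (i' : ℕ) = i := ⟨⟨i, hi⟩, rfl⟩
    have hc : (if t = a + 1 then bkCount T a i else rowCount T t i) ≤ ν i := by
      have := (bkCount_le_interlaceHigh hν hT a i).trans
        (interlaceHigh_le (rowCount T a) (rowCount T (a + 2)) i)
      have := rowCount_le_length T (a + 2) i
      have := rowCount_le_length T t i
      split_ifs <;> omega
    exact rowCount_eq_of_lt_iff hc (val_bk_lt_iff hν hT ha i · t)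
  · rw [rowCount_of_le _ (not_lt.1 hi), rowCount_of_le _ (not_lt.1 hi),
      bkCount_of_le T a (not_lt.1 hi), ite_self]

lemma rowCount_bk_of_ne (hν : Antitone ν) (hT : IsSSYT ν T) {a : ℕ} (ha : a + 1 < N) {t : ℕ}
    (ht : t ≠ a + 1) : rowCount (bk T a ha) t = rowCount T t :=
  funext fun i => (rowCount_bk hν hT ha t i).trans (if_neg ht)

lemma rowCount_bk_self (hν : Antitone ν) (hT : IsSSYT ν T) {a : ℕ} (ha : a + 1 < N) :
    rowCount (bk T a ha) (a + 1) = bkCount T a :=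
  funext fun i => (rowCount_bk hν hT ha (a + 1) i).trans (if_pos rfl)

theorem isSSYT_bk (hν : Antitone ν) (hT : IsSSYT ν T) {a : ℕ} (ha : a + 1 < N) :
    IsSSYT ν (bk T a ha) := by
  have hint := ((isSSYT_iff_rowCount hν).1 hT).2
  refine (isSSYT_iff_rowCount hν).2
    ⟨fun i => monotone_of_lt_iff _ fun t j => val_bk_lt_iff hν hT ha i j t, fun t i => ?_⟩
  rw [rowCount_bk hν hT ha, rowCount_bk hν hT ha]
  by_cases h1 : t = a
  · subst h1
    rw [if_pos rfl, if_neg (by omega)]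
    exact (bkCount_le_interlaceHigh hν hT t (i + 1)).trans (min_le_right _ _)
  by_cases h2 : t = a + 1
  · subst h2
    rw [if_neg (by omega), if_pos rfl]
    exact (le_max_right _ _).trans (interlaceLow_le_bkCount hν hT a i)
  rw [if_neg (by omega), if_neg h2]
  exact hint t i

theorem bk_bk (hν : Antitone ν) (hT : IsSSYT ν T) {a : ℕ} (ha : a + 1 < N) :
    bk (bk T a ha) a ha = T := by
  have hT' := isSSYT_bk hν hT ha
  refine eq_of_rowCount_eq (isSSYT_bk hν hT' ha).1 hT.1 fun t => funext fun i => ?_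
  rw [rowCount_bk hν hT' ha]
  split_ifs with ht
  · subst ht
    have hL := interlaceLow_le_rowCount hν hT a i
    have hU := rowCount_le_interlaceHigh hν hT a i
    rw [bkCount, rowCount_bk_of_ne hν hT ha (by omega : a ≠ a + 1),
      rowCount_bk_of_ne hν hT ha (by omega : a + 2 ≠ a + 1), rowCount_bk_self hν hT ha, bkCount]
    omega
  · rw [rowCount_bk hν hT ha, if_neg ht]

lemma sum_bkCount (hν : Antitone ν) (hT : IsSSYT ν T) (a : ℕ) :
    ∑ i : Fin m, bkCount T a i + ∑ i : Fin m, rowCount T (a + 1) i =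
      ∑ i : Fin m, rowCount T a i + ∑ i : Fin m, rowCount T (a + 2) i := by
  have key := sum_interlaceLow_add_interlaceHigh (rowCount T a) (rowCount T (a + 2)) m
  have hU := interlaceHigh_le (rowCount T a) (rowCount T (a + 2)) m
  rw [rowCount_of_le T le_rfl] at key hU
  rw [Nat.le_zero.1 hU, add_zero, add_zero] at key
  rw [← Fin.sum_univ_eq_sum_range, ← Fin.sum_univ_eq_sum_range (fun i => rowCount T a i + _)]
    at key
  rw [← sum_add_distrib, ← sum_add_distrib, ← key]
  refine sum_congr rfl fun i _ => ?_
  have := interlaceLow_le_rowCount hν hT a i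
  have := rowCount_le_interlaceHigh hν hT a i
  unfold bkCount
  omega

theorem tabCount_bk (hν : Antitone ν) (hT : IsSSYT ν T) {a : ℕ} (ha : a + 1 < N) (v : Fin N) :
    tabCount ν (bk T a ha) v = tabCount ν T (Equiv.swap ⟨a, by omega⟩ ⟨a + 1, ha⟩ v) := by
  have hsum : ∑ i : Fin m, bkCount T a i + ∑ i : Fin m, rowCount T (a + 1) i =
      ∑ i : Fin m, rowCount T a i + ∑ i : Fin m, rowCount T (a + 1 + 1) i :=
    sum_bkCount hν hT a
  have hS (S : Tab m ν N) (w : ℕ) (hw : w < N) :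
      ∑ i : Fin m, rowCount S (w + 1) i =
        ∑ i : Fin m, rowCount S w i + tabCount ν S ⟨w, hw⟩ :=
    sum_rowCount_succ S ⟨w, hw⟩
  by_cases hva : v = ⟨a, by omega⟩
  · subst hva
    rw [Equiv.swap_apply_left]
    have h1 := hS (bk T a ha) a (by omega)
    have h2 := hS T (a + 1) ha
    rw [rowCount_bk_self hν hT ha, rowCount_bk_of_ne hν hT ha (by omega : a ≠ a + 1)] at h1
    omega
  by_cases hvb : v = ⟨a + 1, ha⟩
  · subst hvb
    rw [Equiv.swap_apply_right]
    have h1 := hS (bk T a ha) (a + 1) ha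
    have h2 := hS T a (by omega)
    rw [rowCount_bk_self hν hT ha, rowCount_bk_of_ne hν hT ha (by omega : a + 1 + 1 ≠ a + 1)]
      at h1
    omega
  rw [Equiv.swap_apply_of_ne_of_ne hva hvb]
  have hv : (v : ℕ) ≠ a := fun h => hva (Fin.ext h)
  have hv' : (v : ℕ) ≠ a + 1 := fun h => hvb (Fin.ext h)
  have h1 := sum_rowCount_succ (bk T a ha) v
  have h2 := sum_rowCount_succ T v
  rw [rowCount_bk_of_ne hν hT ha (by omega : (v : ℕ) + 1 ≠ a + 1),
    rowCount_bk_of_ne hν hT ha hv'] at h1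
  omega

end BenderKnuth

section SymmetricFunction

variable {m N : ℕ} {ν : Fin m → ℕ} {R : Type*} [CommSemiring R]

open Classical in
noncomputable def ssytGen (ν : Fin m → ℕ) (N : ℕ) (g : Fin N → R) : R :=
  ∑ T : Tab m ν N, if IsSSYT ν T then ∏ i, ∏ j, g (T i j) else 0

lemma prod_eq_prod_pow_tabCount {M : Type*} [CommMonoid M] (T : Tab m ν N) (g : Fin N → M) :
    ∏ i, ∏ j, g (T i j) = ∏ v, g v ^ tabCount ν T v := by
  have hrow (i : Fin m) : ∏ j, g (T i j) = ∏ v, g v ^ #{j | T i j = v} := by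
    rw [← prod_fiberwise univ (T i)]
    exact prod_congr rfl fun v _ => prod_congr rfl (fun j hj => by rw [(mem_filter.1 hj).2])
      |>.trans (prod_const _)
  simp only [hrow, tabCount]
  rw [prod_comm]
  simp only [prod_pow_eq_pow_sum]

theorem ssytGen_comp_swap (hν : Antitone ν) (g : Fin N → R) {a : ℕ} (ha : a + 1 < N) :
    ssytGen ν N (g ∘ Equiv.swap ⟨a, by omega⟩ ⟨a + 1, ha⟩) = ssytGen ν N g := by
  classical
  set σ := Equiv.swap (⟨a, by omega⟩ : Fin N) ⟨a + 1, ha⟩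
  simp only [ssytGen, ← sum_filter]
  have mem {T : Tab m ν N} : T ∈ ({T | IsSSYT ν T} : Finset _) ↔ IsSSYT ν T := by simp
  refine sum_nbij' (bk · a ha) (bk · a ha)
    (fun T hT => mem.2 (isSSYT_bk hν (mem.1 hT) ha))
    (fun T hT => mem.2 (isSSYT_bk hν (mem.1 hT) ha))
    (fun T hT => bk_bk hν (mem.1 hT) ha) (fun T hT => bk_bk hν (mem.1 hT) ha) fun T hT => ?_
  have hT := mem.1 hT
  rw [prod_eq_prod_pow_tabCount, prod_eq_prod_pow_tabCount]
  simp only [tabCount_bk hν hT ha, Function.comp_apply]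
  rw [← Equiv.prod_comp σ]
  simp [σ]

theorem ssytGen_comp_perm (hν : Antitone ν) (σ : Equiv.Perm (Fin N)) (g : Fin N → R) :
    ssytGen ν N (g ∘ σ) = ssytGen ν N g := by
  cases N with
  | zero => rw [Subsingleton.elim σ 1]; rfl
  | succ N =>
    have hσ : σ ∈ Submonoid.closure
        (Set.range fun k : Fin N => Equiv.swap k.castSucc k.succ) := by
      rw [Equiv.Perm.mclosure_swap_castSucc_succ]
      trivial
    induction hσ using Submonoid.closure_induction generalizing g with
    | mem τ hτ =>
      obtain ⟨k, rfl⟩ := hτ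
      exact ssytGen_comp_swap hν g (a := k) (by omega)
    | one => rfl
    | mul σ τ _ _ hσ hτ => exact (hτ (g ∘ σ)).trans (hσ g)

end SymmetricFunction

section KeyFillings

variable {α : Fin n → ℕ}

lemma cyc_iff_of_le {a b c : ℕ} (h : b ≤ a) : cyc (b, 1) (a, 3) (c, 2) ↔ c < b ∨ a < c := by
  simp only [cyc, tlt]
  omega

lemma maj_eq_zero_iff (F : Fin n → ℕ → ℕ) :
    maj α F = 0 ↔ ∀ i j, j < α i → F i (j + 1) ≤ F i j := by
  simp only [maj, sum_eq_zero_iff, mem_univ, true_implies, mem_Icc, ite_eq_right_iff]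
  constructor
  · intro h i j hj
    have := h i (j + 1) ⟨by omega, hj⟩
    simp only [Nat.add_sub_cancel] at this
    omega
  · intro h i j hj hlt
    have := h i (j - 1) (by omega)
    rw [Nat.sub_add_cancel hj.1] at this
    omega

lemma not_typeB_of_antitone (hα : Antitone α) (r r' : Fin n) (j : ℕ) : ¬ typeB α r r' j :=
  fun h => (hα h.1.le).not_gt h.2.2.2.2

theorem coinvFree_and_maj_eq_zero_iff (hα : Antitone α) {F : Fin n → ℕ → ℕ}
    (h0 : StrictAnti fun i => F i 0) :
    CoinvFree α F ∧ maj α F = 0 ↔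
      (∀ i j, j < α i → F i (j + 1) ≤ F i j) ∧
        ∀ r r', r < r' → ∀ j ≤ α r', F r' j < F r j := by
  rw [maj_eq_zero_iff]
  constructor
  · rintro ⟨⟨hA, -⟩, hrow⟩
    refine ⟨hrow, fun r r' hr j => ?_⟩
    induction j with
    | zero => exact fun _ => h0 hr
    | succ j ih =>
      intro hj
      have hinv := hA r r' (j + 1) ⟨hr, by omega, hj.trans (hα hr.le), hj, hα hr.le⟩
      rw [invA, Nat.add_sub_cancel, cyc_iff_of_le (hrow r j (by have := hα hr.le; omega))]
        at hinv
      have := hrow r' j hj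
      have := ih (by omega)
      omega
  · rintro ⟨hrow, hcol⟩
    refine ⟨⟨fun r r' j ⟨hr, hj, hjr, hjr', _⟩ => ?_,
      fun r r' j h => (not_typeB_of_antitone hα r r' j h).elim⟩, hrow⟩
    obtain ⟨j, rfl⟩ := Nat.exists_eq_add_of_le' hj
    rw [invA, Nat.add_sub_cancel, cyc_iff_of_le (hrow r j hjr)]
    exact Or.inl (hcol r r' hr _ hjr')

lemma entry_succ (σ : Fin n → ℕ) (G : Fill n α) (i : Fin n) (j : Fin (α i)) :
    entry α σ G i (j + 1) = G i j + 1 := by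
  simp [entry]

lemma strictAnti_keyBasement : StrictAnti (keyBasement n) := fun i i' h => by
  have := i'.isLt
  simp only [keyBasement]
  omega

theorem coinvFree_keyBasement_and_maj_eq_zero_iff (hα : Antitone α) (G : Fill n α) :
    CoinvFree α (entry α (keyBasement n) G) ∧ maj α (entry α (keyBasement n) G) = 0 ↔
      IsSSYT α (fun i j => (G i j).rev) := by
  rw [coinvFree_and_maj_eq_zero_iff hα strictAnti_keyBasement]
  constructor
  · rintro ⟨hrow, hcol⟩
    refine ⟨fun i j j' hjj' => ?_, fun i i' hi j hj => ?_⟩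
    · have hanti : AntitoneOn (entry α (keyBasement n) G i) (Set.Iic (α i)) :=
        antitoneOn_of_add_one_le Set.ordConnected_Iic fun k _ _ hk => hrow i k hk
      have := hanti (Set.mem_Iic.2 j.isLt) (Set.mem_Iic.2 j'.isLt)
        (Nat.succ_le_succ (Fin.le_def.1 hjj'))
      rw [entry_succ, entry_succ] at this
      exact Fin.rev_le_rev.2 (Fin.le_def.2 (by omega))
    · have := hcol i i' hi (j + 1) j.isLt
      rw [entry_succ, entry_succ (j := ⟨j, hj⟩)] at this
      exact Fin.rev_lt_rev.2 (Fin.lt_def.2 (by omega))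
  · intro hT
    refine ⟨fun i j hj => ?_, fun r r' hr j hj => ?_⟩
    · cases j with
      | zero =>
        have h1 : (i : ℕ) ≤ (G i ⟨0, hj⟩).rev := hT.row_le_entry hα i ⟨0, hj⟩
        rw [Fin.val_rev] at h1
        rw [entry_succ (j := ⟨0, hj⟩)]
        simp only [entry, keyBasement, if_true]
        omega
      | succ j =>
        have h1 : (G i ⟨j, by omega⟩).rev ≤ (G i ⟨j + 1, hj⟩).rev :=
          hT.1 i ⟨j, by omega⟩ ⟨j + 1, hj⟩ (Fin.le_def.2 (Nat.le_succ j))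
        rw [entry_succ (j := ⟨j + 1, hj⟩), entry_succ (j := ⟨j, by omega⟩)]
        rw [Fin.rev_le_rev, Fin.le_def] at h1
        omega
    · cases j with
      | zero => exact strictAnti_keyBasement hr
      | succ j =>
        have hjr : j < α r := by have := hα hr.le; omega
        have h1 : (G r ⟨j, hjr⟩).rev < (G r' ⟨j, hj⟩).rev := hT.2 r r' hr ⟨j, hj⟩ hjr
        rw [entry_succ (j := ⟨j, hj⟩), entry_succ (j := ⟨j, hjr⟩)]
        rw [Fin.rev_lt_rev, Fin.lt_def] at h1
        omega

end KeyFillings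

open Classical in
/-- The key polynomial of a partition equals the Schur polynomial:
`K_λ(x_1, …, x_n) = s_λ(x_1, …, x_n)`. -/
theorem key_polynomial_eq_schur (n : ℕ) (lam : Fin n → ℕ)
    (hlam : ∀ i j : Fin n, i ≤ j → lam j ≤ lam i) :
    (∑ G : Fill n lam,
      if CoinvFree lam (entry lam (keyBasement n) G) ∧
         maj lam (entry lam (keyBasement n) G) = 0 then xwt lam G else 0) =
    schurPoly n lam n := by
  have hrev : Function.Involutive fun (G : Fill n lam) i j => (G i j).rev :=
    fun G => by simp
  calc _ = ∑ G : Fill n lam, if IsSSYT lam (fun i j => (G i j).rev) then xwt lam G else 0 :=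
        sum_congr rfl fun G _ =>
          if_congr (coinvFree_keyBasement_and_maj_eq_zero_iff hlam G) rfl rfl
    _ = ssytGen lam n fun v => MvPolynomial.X ((v.rev : ℕ) + 1) := by
        unfold ssytGen
        exact Fintype.sum_bijective _ hrev.bijective _ _ fun G => by simp [xwt]
    _ = ssytGen lam n fun v => MvPolynomial.X ((v : ℕ) + 1) :=
        ssytGen_comp_perm hlam Fin.revPerm fun v => MvPolynomial.X ((v : ℕ) + 1)
    _ = schurPoly n lam n := rfl

end Paper
end
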